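/- arXiv:2406.01450 — 2 statements merged into one kernel-verified Lean document; each statement's English description precedes it below -/
import Mathlib

section
/- Let n be a positive natural number, R ∈ (0,∞], and Φ:(0,R)→(0,∞) be continuous and decreasing. If there exists C > 0 such that ∫₀^r Φ(ρ)ρ^{n-1} dρ ≤ C·Φ(r)·r^n for all r ∈ (0,R), then the function r ↦ Φ(r)·r^n is quasi-increasing on (0,R), i.e., there exists C' ≥ 1 such that Φ(r₁)·r₁^n ≤ C'·Φ(r₂)·r₂^n whenever 0 < r₁ < r₂ < R. -/
open MeasureTheory Set ENNReal

/-- B_n(R) ⊆ A_n(R): the defining integral inequality of B_n(R) implies that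
`Φ(r)·rⁿ` is quasi-increasing on (0,R). Here `R ∈ (0,∞]` is modeled as `ℝ≥0∞`. -/
theorem Bn_subset_An (n : ℕ) (hn : 0 < n) (R : ℝ≥0∞) (hR : 0 < R)
    (Φ : ℝ → ℝ)
    (hpos : ∀ r : ℝ, 0 < r → ENNReal.ofReal r < R → 0 < Φ r)
    (hcont : ContinuousOn Φ {r : ℝ | 0 < r ∧ ENNReal.ofReal r < R})
    (hdec : ∀ r₁ r₂ : ℝ, 0 < r₁ → r₁ < r₂ → ENNReal.ofReal r₂ < R → Φ r₂ ≤ Φ r₁)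
    (C : ℝ) (hC : 0 < C)
    (hB : ∀ r : ℝ, 0 < r → ENNReal.ofReal r < R →
      ∫⁻ ρ in Ioo (0 : ℝ) r, ENNReal.ofReal (Φ ρ * ρ ^ (n - 1)) ≤
        ENNReal.ofReal (C * (Φ r * r ^ n))) :
    ∃ C' : ℝ, 1 ≤ C' ∧ ∀ r₁ r₂ : ℝ, 0 < r₁ → r₁ < r₂ → ENNReal.ofReal r₂ < R →
      Φ r₁ * r₁ ^ n ≤ C' * (Φ r₂ * r₂ ^ n) := by
  refine ⟨max 1 (n * C), le_max_left _ _, ?_⟩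
  intro r₁ r₂ hr₁ hlt hR₂
  have hr₂ : 0 < r₂ := hr₁.trans hlt
  have hR₁ : ENNReal.ofReal r₁ < R :=
    lt_of_le_of_lt (ENNReal.ofReal_le_ofReal hlt.le) hR₂
  have hΦ₁ : 0 < Φ r₁ := hpos _ hr₁ hR₁
  have hΦ₂ : 0 < Φ r₂ := hpos _ hr₂ hR₂
  -- compute the lintegral of the constant-times-power lower bound
  have hint : IntegrableOn (fun ρ : ℝ => Φ r₁ * ρ ^ (n - 1)) (Ioo 0 r₁) := by
    exact ((continuous_const.mul (continuous_pow (n - 1))).integrableOn_Icc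
      (a := 0) (b := r₁)).mono_set Ioo_subset_Icc_self
  have heq : ∫⁻ ρ in Ioo (0:ℝ) r₁, ENNReal.ofReal (Φ r₁ * ρ ^ (n - 1)) =
      ENNReal.ofReal (Φ r₁ * (r₁ ^ n / n)) := by
    rw [← ofReal_integral_eq_lintegral_ofReal hint ?_]
    · congr 1
      have h1 : ∫ ρ in Ioo (0:ℝ) r₁, Φ r₁ * ρ ^ (n - 1) =
          ∫ ρ in (0:ℝ)..r₁, Φ r₁ * ρ ^ (n - 1) := by
        rw [intervalIntegral.integral_of_le hr₁.le, integral_Ioc_eq_integral_Ioo]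
      rw [h1, intervalIntegral.integral_const_mul, integral_pow]
      have hnn : n - 1 + 1 = n := Nat.succ_pred_eq_of_pos hn
      have hc : ((n - 1 : ℕ) : ℝ) + 1 = (n : ℝ) := by exact_mod_cast hnn
      rw [hnn, hc, zero_pow hn.ne', sub_zero]
    · filter_upwards [ae_restrict_mem measurableSet_Ioo] with ρ hρ
      have : (0:ℝ) ≤ ρ := hρ.1.le
      positivity
  -- lower bound
  have key1 : ENNReal.ofReal (Φ r₁ * (r₁ ^ n / n)) ≤
      ∫⁻ ρ in Ioo (0:ℝ) r₁, ENNReal.ofReal (Φ ρ * ρ ^ (n - 1)) := by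
    rw [← heq]
    refine setLIntegral_mono' measurableSet_Ioo ?_
    intro ρ hρ
    refine ENNReal.ofReal_le_ofReal ?_
    have hρ0 : (0:ℝ) ≤ ρ := hρ.1.le
    exact mul_le_mul_of_nonneg_right (hdec ρ r₁ hρ.1 hρ.2 hR₁) (by positivity)
  have key2 : (∫⁻ ρ in Ioo (0:ℝ) r₁, ENNReal.ofReal (Φ ρ * ρ ^ (n - 1))) ≤
      ∫⁻ ρ in Ioo (0:ℝ) r₂, ENNReal.ofReal (Φ ρ * ρ ^ (n - 1)) :=
    lintegral_mono_set (Ioo_subset_Ioo le_rfl hlt.le)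
  have key : ENNReal.ofReal (Φ r₁ * (r₁ ^ n / n)) ≤
      ENNReal.ofReal (C * (Φ r₂ * r₂ ^ n)) :=
    (key1.trans key2).trans (hB r₂ hr₂ hR₂)
  have hreal : Φ r₁ * (r₁ ^ n / n) ≤ C * (Φ r₂ * r₂ ^ n) := by
    have hrhs : 0 ≤ C * (Φ r₂ * r₂ ^ n) := by positivity
    exact (ENNReal.ofReal_le_ofReal_iff hrhs).mp key
  have hn' : (0:ℝ) < n := by exact_mod_cast hn
  have step : Φ r₁ * r₁ ^ n ≤ (n * C) * (Φ r₂ * r₂ ^ n) := by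
    have := mul_le_mul_of_nonneg_left hreal hn'.le
    calc Φ r₁ * r₁ ^ n = (n:ℝ) * (Φ r₁ * (r₁ ^ n / n)) := by
          field_simp
      _ ≤ (n:ℝ) * (C * (Φ r₂ * r₂ ^ n)) := this
      _ = (n * C) * (Φ r₂ * r₂ ^ n) := by ring
  exact step.trans (mul_le_mul_of_nonneg_right (le_max_right _ _) (by positivity))
end

section
/- Let Φ ∈ B_n(∞) with constant C in the defining inequality ∫₀^r Φ(ρ)ρ^{n-1} dρ ≤ C·Φ(r)·r^n. Then there exists γ ∈ (0,n) such that r ↦ Φ(r)·r^γ is (quasi-)increasing on (0,∞). -/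
open MeasureTheory Set ENNReal

/-- For `Φ ∈ B_n(∞)` there exists `γ ∈ (0,n)` such that `r ↦ Φ(r)·r^γ` is
quasi-increasing on `(0,∞)`. -/
theorem Bn_rpow_quasi_increasing (n : ℕ) (hn : 0 < n) (Φ : ℝ → ℝ)
    (hpos : ∀ r : ℝ, 0 < r → 0 < Φ r)
    (hcont : ContinuousOn Φ (Ioi (0 : ℝ)))
    (hdec : AntitoneOn Φ (Ioi (0 : ℝ)))
    (C : ℝ) (hC : 0 < C)
    (hB : ∀ r : ℝ, 0 < r →
      ∫⁻ ρ in Ioo (0 : ℝ) r, ENNReal.ofReal (Φ ρ * ρ ^ (n - 1)) ≤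
        ENNReal.ofReal (C * (Φ r * r ^ n))) :
    ∃ γ : ℝ, 0 < γ ∧ γ < n ∧ ∃ C' : ℝ, 1 ≤ C' ∧
      ∀ r₁ r₂ : ℝ, 0 < r₁ → r₁ < r₂ →
        Φ r₁ * r₁ ^ γ ≤ C' * (Φ r₂ * r₂ ^ γ) := by
  have hn1 : (1:ℝ) ≤ n := by exact_mod_cast hn
  set C₀ : ℝ := C + 1 with hC₀def
  have hC₀ : 1 < C₀ := by simp only [hC₀def]; linarith
  have hC₀pos : 0 < C₀ := by linarith
  set δ : ℝ := 1 / C₀ with hδdef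
  have hδpos : 0 < δ := by positivity
  have hδlt1 : δ < 1 := by rw [hδdef, div_lt_one hC₀pos]; exact hC₀
  set f : ℝ → ℝ := fun ρ => Φ ρ * ρ ^ (n - 1) with hfdef
  have hfnn : ∀ ρ : ℝ, 0 < ρ → 0 ≤ f ρ := fun ρ hρ =>
    mul_nonneg (hpos ρ hρ).le (pow_nonneg hρ.le _)
  have hfc : ContinuousOn f (Ioi (0:ℝ)) :=
    hcont.mul (continuous_pow _).continuousOn
  -- integrability on `Ioo 0 r`
  have hint : ∀ r : ℝ, 0 < r → IntegrableOn f (Ioo 0 r) := by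
    intro r hr
    refine ⟨(hfc.mono fun x hx => hx.1).aestronglyMeasurable measurableSet_Ioo, ?_⟩
    rw [hasFiniteIntegral_iff_ofReal ?_]
    · exact lt_of_le_of_lt (hB r hr) ofReal_lt_top
    · filter_upwards [ae_restrict_mem measurableSet_Ioo] with x hx
      exact hfnn x hx.1
  -- upper bound for the integral
  have hup : ∀ r : ℝ, 0 < r → ∫ ρ in Ioo (0:ℝ) r, f ρ ≤ C * (Φ r * r ^ n) := by
    intro r hr
    have hnn : 0 ≤ᵐ[volume.restrict (Ioo (0:ℝ) r)] f := by
      filter_upwards [ae_restrict_mem measurableSet_Ioo] with x hx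
      exact hfnn x hx.1
    rw [integral_eq_lintegral_of_nonneg_ae hnn
      ((hfc.mono fun x hx => hx.1).aestronglyMeasurable measurableSet_Ioo)]
    calc (∫⁻ ρ in Ioo (0:ℝ) r, ENNReal.ofReal (f ρ)).toReal
        ≤ (ENNReal.ofReal (C * (Φ r * r ^ n))).toReal :=
          ENNReal.toReal_mono ofReal_ne_top (hB r hr)
      _ = C * (Φ r * r ^ n) := ENNReal.toReal_ofReal
          (mul_nonneg hC.le (mul_nonneg (hpos r hr).le (pow_nonneg hr.le _)))
  -- lower bound for the integral
  have hlow : ∀ r : ℝ, 0 < r → Φ r * r ^ n / n ≤ ∫ ρ in Ioo (0:ℝ) r, f ρ := by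
    intro r hr
    have h1 : ∫ ρ in Ioo (0:ℝ) r, Φ r * ρ ^ (n-1) ≤ ∫ ρ in Ioo (0:ℝ) r, f ρ := by
      refine setIntegral_mono_on ?_ (hint r hr) measurableSet_Ioo ?_
      · exact ((continuous_const.mul (continuous_pow _)).integrableOn_Icc).mono_set Ioo_subset_Icc_self
      · intro ρ hρ
        exact mul_le_mul_of_nonneg_right (hdec hρ.1 (hr.trans_le le_rfl) hρ.2.le)
          (pow_nonneg hρ.1.le _)
    have h2 : ∫ ρ in Ioo (0:ℝ) r, Φ r * ρ ^ (n-1) = Φ r * (r ^ n / n) := by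
      rw [MeasureTheory.integral_const_mul]
      congr 1
      rw [← MeasureTheory.integral_Ioc_eq_integral_Ioo,
        ← intervalIntegral.integral_of_le hr.le, integral_pow]
      rw [Nat.sub_add_cancel hn, zero_pow hn.ne', Nat.cast_sub hn]
      push_cast
      ring
    calc Φ r * r ^ n / n = Φ r * (r ^ n / n) := by ring
      _ ≤ _ := h2 ▸ h1
  -- the primitive `F`
  set F : ℝ → ℝ := fun r => ∫ ρ in (0:ℝ)..r, f ρ with hFdef
  have hII : ∀ r : ℝ, 0 < r → IntervalIntegrable f volume 0 r := by
    intro r hr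
    rw [intervalIntegrable_iff_integrableOn_Ioo_of_le hr.le]
    exact hint r hr
  have hFval : ∀ r : ℝ, 0 < r → F r = ∫ ρ in Ioo (0:ℝ) r, f ρ := by
    intro r hr
    simp only [hFdef]
    rw [intervalIntegral.integral_of_le hr.le, MeasureTheory.integral_Ioc_eq_integral_Ioo]
  have hderivF : ∀ r : ℝ, 0 < r → HasDerivAt F (f r) r := by
    intro r hr
    exact intervalIntegral.integral_hasDerivAt_right (hII r hr)
      (hfc.stronglyMeasurableAtFilter isOpen_Ioi r hr)
      (hfc.continuousAt (Ioi_mem_nhds hr))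
  -- `G r = F r * r ^ (-δ)`
  set G : ℝ → ℝ := fun r => F r * r ^ (-δ) with hGdef
  have hderivG : ∀ r : ℝ, 0 < r →
      HasDerivAt G (f r * r ^ (-δ) + F r * (-δ * r ^ (-δ - 1))) r := by
    intro r hr
    exact (hderivF r hr).mul (Real.hasDerivAt_rpow_const (Or.inl hr.ne'))
  have key : ∀ r : ℝ, 0 < r →
      0 ≤ f r * r ^ (-δ) + F r * (-δ * r ^ (-δ - 1)) := by
    intro r hr
    have hFub : F r ≤ C * (Φ r * r ^ n) := by rw [hFval r hr]; exact hup r hr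
    have hfr : f r * r = Φ r * r ^ n := by
      simp only [hfdef]
      rw [mul_assoc, ← pow_succ, Nat.sub_add_cancel hn]
    have hδC : δ * C ≤ 1 := by
      rw [hδdef, div_mul_eq_mul_div, one_mul, div_le_one hC₀pos]
      linarith
    have h1 : δ * F r ≤ f r * r := by
      rw [hfr]
      have hΦn : 0 < Φ r * r ^ n := mul_pos (hpos r hr) (pow_pos hr n)
      calc δ * F r ≤ δ * (C * (Φ r * r ^ n)) :=
            mul_le_mul_of_nonneg_left hFub hδpos.le
        _ = (δ * C) * (Φ r * r ^ n) := by ring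
        _ ≤ 1 * (Φ r * r ^ n) := mul_le_mul_of_nonneg_right hδC hΦn.le
        _ = Φ r * r ^ n := one_mul _
    have hre : r ^ (-δ) = r ^ (-δ - 1) * r := by
      rw [← Real.rpow_add_one hr.ne' (-δ - 1)]
      norm_num
    have hrp : (0:ℝ) ≤ r ^ (-δ - 1) := Real.rpow_nonneg hr.le _
    calc (0:ℝ) ≤ r ^ (-δ - 1) * (f r * r - δ * F r) :=
          mul_nonneg hrp (by linarith)
      _ = f r * r ^ (-δ) + F r * (-δ * r ^ (-δ - 1)) := by rw [hre]; ring
  refine ⟨(n : ℝ) - δ, by linarith, by linarith, n * C₀, ?_, ?_⟩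
  · nlinarith
  intro r₁ r₂ hr₁ hlt
  have hr₂ : 0 < r₂ := hr₁.trans hlt
  -- monotonicity of `G` on `[r₁, r₂]`
  have hmono : MonotoneOn G (Icc r₁ r₂) := by
    apply monotoneOn_of_deriv_nonneg (convex_Icc _ _)
    · intro x hx
      exact ((hderivG x (lt_of_lt_of_le hr₁ hx.1)).continuousAt).continuousWithinAt
    · intro x hx
      rw [interior_Icc] at hx
      exact ((hderivG x (hr₁.trans hx.1)).differentiableAt).differentiableWithinAt
    · intro x hx
      rw [interior_Icc] at hx
      have hx0 : 0 < x := hr₁.trans hx.1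
      rw [(hderivG x hx0).deriv]
      exact key x hx0
  have hG : G r₁ ≤ G r₂ :=
    hmono (left_mem_Icc.2 hlt.le) (right_mem_Icc.2 hlt.le) hlt.le
  -- unfold and conclude
  have hsplit : ∀ r : ℝ, 0 < r → r ^ ((n:ℝ) - δ) = r ^ n * r ^ (-δ) := by
    intro r hr
    rw [sub_eq_add_neg, Real.rpow_add hr, Real.rpow_natCast]
  have hlow₁ : Φ r₁ * r₁ ^ n ≤ n * F r₁ := by
    have := hlow r₁ hr₁
    rw [← hFval r₁ hr₁] at this
    rw [div_le_iff₀ (by positivity)] at this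
    linarith [this]
  have hup₂ : F r₂ ≤ C * (Φ r₂ * r₂ ^ n) := by
    rw [hFval r₂ hr₂]; exact hup r₂ hr₂
  have hnδ₁ : (0:ℝ) ≤ r₁ ^ (-δ) := Real.rpow_nonneg hr₁.le _
  have hnδ₂ : (0:ℝ) ≤ r₂ ^ (-δ) := Real.rpow_nonneg hr₂.le _
  calc Φ r₁ * r₁ ^ ((n:ℝ) - δ) = (Φ r₁ * r₁ ^ n) * r₁ ^ (-δ) := by
        rw [hsplit r₁ hr₁]; ring
    _ ≤ (n * F r₁) * r₁ ^ (-δ) := mul_le_mul_of_nonneg_right hlow₁ hnδ₁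
    _ = n * G r₁ := by rw [hGdef]; ring
    _ ≤ n * G r₂ := mul_le_mul_of_nonneg_left hG (by positivity)
    _ = n * (F r₂ * r₂ ^ (-δ)) := by rw [hGdef]
    _ ≤ n * ((C * (Φ r₂ * r₂ ^ n)) * r₂ ^ (-δ)) := by
        apply mul_le_mul_of_nonneg_left (mul_le_mul_of_nonneg_right hup₂ hnδ₂)
        positivity
    _ ≤ n * C₀ * (Φ r₂ * r₂ ^ ((n:ℝ) - δ)) := by
        rw [hsplit r₂ hr₂]
        have hΦ₂ : 0 ≤ Φ r₂ := (hpos r₂ hr₂).le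
        have hCle : C ≤ C₀ := by simp [hC₀def]
        have hbase : Φ r₂ * r₂ ^ n * r₂ ^ (-δ) ≥ 0 := by positivity
        nlinarith [mul_le_mul_of_nonneg_right hCle hbase]
end
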